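/- In any profile whose antisymmetric margin function on {a,b,c,d} satisfies 0 < m(d,a) < m(d,c) < m(b,d) < m(c,b) < m(b,a) < m(a,c) (ordinal margin graph M_2), the defensible set is exactly {b, d}; note d is a Condorcet loser is false here — rather d beats a and c — and b is not a Condorcet winner. -/

import Mathlib

/-!
For an antisymmetric margin function, `x` is defensible iff every `y` beating `x` is itself
beaten by at least that margin. In `M₂`, `b` is beaten only by `c` and `d` only by `b`, and
`a` beats `c` (resp. `c` beats `b`) by more. On the other hand `b`'s win over `a` and `a`'s
win over `c`, the largest margin of all, are answered by nothing.
-/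

inductive Alt : Type
  | a | b | c | d
deriving DecidableEq

open Alt

def IsCondorcetWinner {α : Type*} (m : α → α → ℤ) (x : α) : Prop :=
  ∀ y, y ≠ x → 0 < m x y

def IsCondorcetLoser {α : Type*} (m : α → α → ℤ) (x : α) : Prop :=
  ∀ y, y ≠ x → 0 < m y x

def IsDefensible {α : Type*} (m : α → α → ℤ) (x : α) : Prop :=
  ∀ y, ∃ z, m y x ≤ m z y

section Antisymmetric

variable {α : Type*} {m : α → α → ℤ}

theorem margin_self (hanti : ∀ x y, m x y = -m y x) (x : α) : m x x = 0 := by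
  linarith [hanti x x]

-- If `y` does not beat `x`, then `z = y` answers it.
theorem isDefensible_of_forall_pos (hanti : ∀ x y, m x y = -m y x) {x : α}
    (h : ∀ y, 0 < m y x → ∃ z, m y x ≤ m z y) : IsDefensible m x := by
  intro y
  by_cases hy : 0 < m y x
  · exact h y hy
  · exact ⟨y, by rw [margin_self hanti]; omega⟩

theorem not_isDefensible_of_forall_lt {x y : α} (h : ∀ z, m z y < m y x) :
    ¬ IsDefensible m x := fun hx ↦ by
  obtain ⟨z, hz⟩ := hx y
  exact (h z).not_ge hz

end Antisymmetric

structure RealizesM2 (m : Alt → Alt → ℤ) : Prop where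
  anti : ∀ x y, m x y = -m y x
  da_pos : 0 < m d a
  da_lt_dc : m d a < m d c
  dc_lt_bd : m d c < m b d
  bd_lt_cb : m b d < m c b
  cb_lt_ba : m c b < m b a
  ba_lt_ac : m b a < m a c

namespace RealizesM2

variable {m : Alt → Alt → ℤ}

theorem isDefensible_b (hm : RealizesM2 m) : IsDefensible m b := by
  refine isDefensible_of_forall_pos hm.anti fun y hy ↦ ?_
  cases y
  case a => linarith [hm.anti a b, hm.da_pos, hm.da_lt_dc, hm.dc_lt_bd, hm.bd_lt_cb, hm.cb_lt_ba]
  case b => exact ⟨b, le_rfl⟩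
  case c => exact ⟨a, by linarith [hm.cb_lt_ba, hm.ba_lt_ac]⟩
  case d => linarith [hm.anti d b, hm.da_pos, hm.da_lt_dc, hm.dc_lt_bd]

theorem isDefensible_d (hm : RealizesM2 m) : IsDefensible m d := by
  refine isDefensible_of_forall_pos hm.anti fun y hy ↦ ?_
  cases y
  case a => linarith [hm.anti a d, hm.da_pos]
  case b => exact ⟨c, hm.bd_lt_cb.le⟩
  case c => linarith [hm.anti c d, hm.da_pos, hm.da_lt_dc]
  case d => exact ⟨d, le_rfl⟩

theorem not_isDefensible_a (hm : RealizesM2 m) : ¬ IsDefensible m a := by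
  refine not_isDefensible_of_forall_lt (y := b) fun z ↦ ?_
  have hba_pos : 0 < m b a := by
    linarith [hm.da_pos, hm.da_lt_dc, hm.dc_lt_bd, hm.bd_lt_cb, hm.cb_lt_ba]
  cases z
  case a => linarith [hm.anti a b]
  case b => linarith [margin_self hm.anti b]
  case c => exact hm.cb_lt_ba
  case d => linarith [hm.anti d b, hm.da_pos, hm.da_lt_dc, hm.dc_lt_bd]

theorem not_isDefensible_c (hm : RealizesM2 m) : ¬ IsDefensible m c := by
  refine not_isDefensible_of_forall_lt (y := a) fun z ↦ ?_
  have hac_pos : 0 < m a c := by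
    linarith [hm.da_pos, hm.da_lt_dc, hm.dc_lt_bd, hm.bd_lt_cb, hm.cb_lt_ba, hm.ba_lt_ac]
  cases z
  case a => linarith [margin_self hm.anti a]
  case b => exact hm.ba_lt_ac
  case c => linarith [hm.anti c a]
  case d => linarith [hm.da_lt_dc, hm.dc_lt_bd, hm.bd_lt_cb, hm.cb_lt_ba, hm.ba_lt_ac]

theorem setOf_isDefensible (hm : RealizesM2 m) : {x | IsDefensible m x} = {b, d} := by
  ext x
  cases x
  case a => simpa using hm.not_isDefensible_a
  case b => simpa using hm.isDefensible_b
  case c => simpa using hm.not_isDefensible_c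
  case d => simpa using hm.isDefensible_d

theorem not_isCondorcetLoser_d (hm : RealizesM2 m) : ¬ IsCondorcetLoser m d :=
  fun hloser ↦ by linarith [hloser a nofun, hm.anti a d, hm.da_pos]

theorem not_isCondorcetWinner_b (hm : RealizesM2 m) : ¬ IsCondorcetWinner m b :=
  fun hwinner ↦ by
    linarith [hwinner c nofun, hm.anti b c, hm.da_pos, hm.da_lt_dc, hm.dc_lt_bd, hm.bd_lt_cb]

end RealizesM2

/-- For any antisymmetric margin function realizing M_2, the
defensible set is exactly {b, d}; moreover d is not a Condorcet loser (d beats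
a and c) and b is not a Condorcet winner. -/
theorem defensible_M2 (m : Alt → Alt → ℤ) (hanti : ∀ x y, m x y = - m y x)
    (h1 : 0 < m d a) (h2 : m d a < m d c) (h3 : m d c < m b d)
    (h4 : m b d < m c b) (h5 : m c b < m b a) (h6 : m b a < m a c) :
    {x : Alt | ∀ y : Alt, ∃ z : Alt, m y x ≤ m z y} = {b, d} ∧
      ¬ (∀ y : Alt, y ≠ d → 0 < m y d) ∧ (0 < m d a ∧ 0 < m d c) ∧
      ¬ (∀ y : Alt, y ≠ b → 0 < m b y) := by
  have hm : RealizesM2 m := ⟨hanti, h1, h2, h3, h4, h5, h6⟩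
  exact ⟨hm.setOf_isDefensible, hm.not_isCondorcetLoser_d, ⟨h1, h1.trans h2⟩,
    hm.not_isCondorcetWinner_b⟩
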